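/- (Theorem 1, conclusion 1, EPS law) Fix d ≥ 1, T > 0, μ : Fin d → ℝ, σx ≥ 0, and measurable schedules γ, σ : ℝ → ℝ with v t := (γ t)²σx² + (σ t)² > 0 for t ∈ [0,T], and with t ↦ γ t / v t and t ↦ σ t / v t integrable on [0,T]. Let X₀ and Z be independent with laws Measure.pi (fun i => gaussianReal (μ i) (σx²)) and Measure.pi (fun i => gaussianReal 0 1). Define the expected perturbation score S = (1/T)·∫₀^T (fun i => −(γ t * X₀ i + σ t * Z i − γ t * μ i)/(v t)) dt (Bochner integral in ℝ^d). Then the law of S is Measure.pi (fun i => gaussianReal 0 (a²σx² + b²)), where a = (1/T)∫₀^T γ t / (v t) dt and b = (1/T)∫₀^T σ t / (v t) dt; in particular the EPS of a natural sample is a centered Gaussian vector. -/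

import Mathlib

/-!
Integrating the score over `t` only averages its two coefficients: the score is
`(γ t / v t) • (μ - X₀) - (σ t / v t) • Z`, so `S = a • (μ - X₀) - b • Z`. Each coordinate of `S`
is then an affine combination of two independent real Gaussians, hence Gaussian with variance
`a²σx² + b²` and mean `a μᵢ - a μᵢ = 0`, and the coordinates are independent because the pairs
`(X₀ i, Z i)` are.
-/

open MeasureTheory ProbabilityTheory
open scoped NNReal

lemma gaussianReal_prod_map_linear (α β m₁ m₂ : ℝ) (v₁ v₂ : ℝ≥0) :
    ((gaussianReal m₁ v₁).prod (gaussianReal m₂ v₂)).map (fun q => α * q.1 + β * q.2)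
      = gaussianReal (α * m₁ + β * m₂)
          (.mk (α ^ 2) (sq_nonneg α) * v₁ + .mk (β ^ 2) (sq_nonneg β) * v₂) := by
  have hsplit : (fun q : ℝ × ℝ => α * q.1 + β * q.2)
      = (fun q : ℝ × ℝ => q.1 + q.2) ∘ Prod.map (α * ·) (β * ·) := rfl
  rw [hsplit, ← Measure.map_map measurable_add (by fun_prop),
    ← Measure.map_prod_map _ _ (by fun_prop) (by fun_prop),
    gaussianReal_map_const_mul, gaussianReal_map_const_mul]
  exact gaussianReal_conv_gaussianReal

lemma gaussianReal_prod_map_affine (α β c m₁ m₂ : ℝ) (v₁ v₂ : ℝ≥0) :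
    ((gaussianReal m₁ v₁).prod (gaussianReal m₂ v₂)).map (fun q => α * q.1 + β * q.2 + c)
      = gaussianReal (α * m₁ + β * m₂ + c)
          (.mk (α ^ 2) (sq_nonneg α) * v₁ + .mk (β ^ 2) (sq_nonneg β) * v₂) := by
  have hsplit : (fun q : ℝ × ℝ => α * q.1 + β * q.2 + c)
      = (· + c) ∘ fun q : ℝ × ℝ => α * q.1 + β * q.2 := rfl
  rw [hsplit, ← Measure.map_map (by fun_prop) (by fun_prop), gaussianReal_prod_map_linear,
    gaussianReal_map_add_const]

lemma MeasureTheory.Measure.map_prod_pi_eq_pi_map {ι α β γ : Type*} [Fintype ι] [MeasurableSpace α]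
    [MeasurableSpace β] [MeasurableSpace γ] (μ : ι → Measure α) (ν : ι → Measure β)
    [∀ i, IsFiniteMeasure (μ i)] [∀ i, IsFiniteMeasure (ν i)] (f : ι → α × β → γ)
    (hf : ∀ i, Measurable (f i)) :
    ((Measure.pi μ).prod (Measure.pi ν)).map (fun p i => f i (p.1 i, p.2 i))
      = Measure.pi fun i => ((μ i).prod (ν i)).map (f i) := by
  have hf' : Measurable fun p : (ι → α) × (ι → β) => fun i => f i (p.1 i, p.2 i) :=
    measurable_pi_lambda _ fun i => (hf i).comp (by fun_prop)
  rw [← (measurePreserving_arrowProdEquivProdArrow α β ι μ ν).map_eq,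
    Measure.map_map hf' (MeasurableEquiv.arrowProdEquivProdArrow α β ι).measurable]
  exact Measure.pi_map_pi fun i => (hf i).aemeasurable

lemma average_score_eq_affine {d : ℕ} {γ σ v : ℝ → ℝ} {T : ℝ}
    (hint1 : IntervalIntegrable (fun t => γ t / v t) volume 0 T)
    (hint2 : IntervalIntegrable (fun t => σ t / v t) volume 0 T) (μ x z : Fin d → ℝ) :
    (1 / T) • ∫ t in (0 : ℝ)..T, (fun i => -(γ t * x i + σ t * z i - γ t * μ i) / v t)
      = fun i => -((1 / T) * ∫ t in (0 : ℝ)..T, γ t / v t) * x i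
          + -((1 / T) * ∫ t in (0 : ℝ)..T, σ t / v t) * z i
          + ((1 / T) * ∫ t in (0 : ℝ)..T, γ t / v t) * μ i := by
  have hscore : ∀ t, (fun i => -(γ t * x i + σ t * z i - γ t * μ i) / v t)
      = (γ t / v t) • (μ - x) + (σ t / v t) • (-z) := fun t => by
    funext i
    simp only [Pi.add_apply, Pi.smul_apply, Pi.sub_apply, Pi.neg_apply, smul_eq_mul]
    ring
  rw [intervalIntegral.integral_congr fun t _ => hscore t,
    intervalIntegral.integral_add ⟨hint1.1.smul_const _, hint1.2.smul_const _⟩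
      ⟨hint2.1.smul_const _, hint2.2.smul_const _⟩,
    intervalIntegral.integral_smul_const, intervalIntegral.integral_smul_const]
  funext i
  simp only [Pi.smul_apply, Pi.add_apply, Pi.sub_apply, Pi.neg_apply, smul_eq_mul]
  ring

theorem eps_natural_law_general (d : ℕ) (T : ℝ) (μ : Fin d → ℝ)
    (σx : ℝ) (γ σ : ℝ → ℝ)
    (v : ℝ → ℝ)
    (hint1 : IntervalIntegrable (fun t => γ t / v t) volume 0 T)
    (hint2 : IntervalIntegrable (fun t => σ t / v t) volume 0 T) :
    Measure.map
      (fun p : (Fin d → ℝ) × (Fin d → ℝ) =>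
        (1 / T) • ∫ t in (0 : ℝ)..T,
          (fun i => -(γ t * p.1 i + σ t * p.2 i - γ t * μ i) / v t))
      ((Measure.pi fun i => gaussianReal (μ i) ((σx ^ 2).toNNReal)).prod
        (Measure.pi fun _ => gaussianReal 0 1))
    = Measure.pi fun _ => gaussianReal 0
        ((((1 / T) * ∫ t in (0 : ℝ)..T, γ t / v t) ^ 2 * σx ^ 2
          + ((1 / T) * ∫ t in (0 : ℝ)..T, σ t / v t) ^ 2).toNNReal) := by
  set a : ℝ := (1 / T) * ∫ t in (0 : ℝ)..T, γ t / v t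
  set b : ℝ := (1 / T) * ∫ t in (0 : ℝ)..T, σ t / v t
  simp_rw [average_score_eq_affine hint1 hint2]
  rw [Measure.map_prod_pi_eq_pi_map _ _ (fun i q => -a * q.1 + -b * q.2 + a * μ i)
    (fun _ => by fun_prop)]
  congr 1
  funext i
  rw [gaussianReal_prod_map_affine]
  congr 1
  · ring
  · rw [← NNReal.coe_inj]
    simp only [NNReal.coe_add, NNReal.coe_mul, NNReal.coe_mk, NNReal.coe_one]
    rw [Real.coe_toNNReal _ (sq_nonneg σx), Real.coe_toNNReal _ (by positivity)]
    ring

/-- Theorem 1, conclusion 1, EPS law: the expected perturbation score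
`S = (1/T)·∫₀ᵀ score_t dt` of a natural sample `X₀ ~ N(μ, σx²·I)` with shared noise
`Z ~ N(0, I)` is a centered Gaussian vector with per-coordinate variance `a²σx² + b²`,
where `a = (1/T)∫₀ᵀ γ t / v t dt` and `b = (1/T)∫₀ᵀ σ t / v t dt`. -/
theorem eps_natural_law (d : ℕ) (hd : 1 ≤ d) (T : ℝ) (hT : 0 < T) (μ : Fin d → ℝ)
    (σx : ℝ) (hσx : 0 ≤ σx) (γ σ : ℝ → ℝ) (hγ : Measurable γ) (hσ : Measurable σ)
    (v : ℝ → ℝ) (hv : ∀ t, v t = (γ t) ^ 2 * σx ^ 2 + (σ t) ^ 2)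
    (hvpos : ∀ t ∈ Set.Icc (0 : ℝ) T, 0 < v t)
    (hint1 : IntervalIntegrable (fun t => γ t / v t) volume 0 T)
    (hint2 : IntervalIntegrable (fun t => σ t / v t) volume 0 T) :
    Measure.map
      (fun p : (Fin d → ℝ) × (Fin d → ℝ) =>
        (1 / T) • ∫ t in (0 : ℝ)..T,
          (fun i => -(γ t * p.1 i + σ t * p.2 i - γ t * μ i) / v t))
      ((Measure.pi fun i => gaussianReal (μ i) ((σx ^ 2).toNNReal)).prod
        (Measure.pi fun _ => gaussianReal 0 1))
    = Measure.pi fun _ => gaussianReal 0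
        ((((1 / T) * ∫ t in (0 : ℝ)..T, γ t / v t) ^ 2 * σx ^ 2
          + ((1 / T) * ∫ t in (0 : ℝ)..T, σ t / v t) ^ 2).toNNReal) :=
  eps_natural_law_general d T μ σx γ σ v hint1 hint2
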